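/- The family 𝒩 of all sets U(S) = ⋃_k (S(a_0)+⋯+S(a_k)), where each a_k is a sequence of positive reals tending to ∞ and S(a) = ⋃_n (-a_n,a_n)·e_n ⊆ ℝ^(ℕ), is a neighborhood base at 0 for a vector topology μ on ℝ^(ℕ), and in this topology the sequence (e_n) converges to 0. -/

import Mathlib

open Filter Pointwise

/-- `a ∈ 𝒜`: a sequence of positive reals tending to `∞`. -/
def memA (a : ℕ → ℝ) : Prop := (∀ n, 0 < a n) ∧ Tendsto a atTop atTop

/-- `S(a) = ⋃ n, (-a_n, a_n)·e_n ⊆ ℝ^(ℕ)`. -/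
def Sset (a : ℕ → ℝ) : Set (ℕ →₀ ℝ) :=
  ⋃ n : ℕ, {x : ℕ →₀ ℝ | ∃ t : ℝ, |t| < a n ∧ x = Finsupp.single n t}

/-- `U(S) = ⋃ k, (S(a_0) + ⋯ + S(a_k))` (Minkowski sums). -/
def Uset (a : ℕ → ℕ → ℝ) : Set (ℕ →₀ ℝ) :=
  ⋃ k : ℕ, ∑ j ∈ Finset.range (k + 1), Sset (a j)

/-!
The sets `U(S)` are balanced, absorbing (a finitely supported vector has finitely many
coordinates, each of which can be made small), and shrinking the sequences `a_k` pairwise,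
`c_k = min a_{2k} a_{2k+1}`, gives `U(c) + U(c) ⊆ U(a)` because the summands of the two copies can
be interleaved into the even and odd slots of a single sum. These are the axioms of a module
filter basis, so they generate a vector topology. Every `U(S)` contains `S(a_0)`, which contains
`e_n` as soon as `a_0 n > 1`.
-/

theorem Set.finsetSum_subset_finsetSum_of_subset {ι M : Type*} [DecidableEq ι] [AddCommMonoid M]
    {s t : Finset ι} (hst : s ⊆ t) {f : ι → Set M} (h : ∀ i ∈ t \ s, (0 : M) ∈ f i) :
    ∑ i ∈ s, f i ⊆ ∑ i ∈ t, f i := by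
  rw [← Finset.sum_sdiff hst]
  exact Set.subset_add_right _ (by simpa using Set.finsetSum_mem_finsetSum _ f 0 h)

theorem memA.min {a b : ℕ → ℝ} (ha : memA a) (hb : memA b) :
    memA fun n => min (a n) (b n) :=
  ⟨fun n => lt_min (ha.1 n) (hb.1 n), tendsto_inf_atTop _ ha.2 hb.2⟩

theorem memA.div_const {a : ℕ → ℝ} (ha : memA a) {c : ℝ} (hc : 0 < c) :
    memA fun n => a n / c :=
  ⟨fun n => div_pos (ha.1 n) hc, ha.2.atTop_div_const hc⟩

section Sset

variable {a b : ℕ → ℝ}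

theorem single_mem_Sset {n : ℕ} {t : ℝ} (ht : |t| < a n) : Finsupp.single n t ∈ Sset a :=
  Set.mem_iUnion.2 ⟨n, t, ht, rfl⟩

theorem zero_mem_Sset {n : ℕ} (h : 0 < a n) : (0 : ℕ →₀ ℝ) ∈ Sset a := by
  simpa using single_mem_Sset (a := a) (n := n) (t := 0) (by simpa using h)

theorem Sset_mono (h : ∀ n, a n ≤ b n) : Sset a ⊆ Sset b := by
  refine Set.iUnion_mono fun n => ?_
  rintro x ⟨t, ht, rfl⟩
  exact ⟨t, ht.trans_le (h n), rfl⟩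

theorem smul_mem_Sset {c t : ℝ} (hc : 0 < c) (ht : |t| ≤ c) {x : ℕ →₀ ℝ}
    (hx : x ∈ Sset fun n => a n / c) : t • x ∈ Sset a := by
  obtain ⟨n, s, hs, rfl⟩ := Set.mem_iUnion.1 hx
  rw [Finsupp.smul_single]
  refine single_mem_Sset ?_
  calc |t • s| = |t| * |s| := abs_mul t s
    _ ≤ c * |s| := by gcongr
    _ < a n := by rwa [lt_div_iff₀' hc] at hs

end Sset

section Uset

variable {a b : ℕ → ℕ → ℝ}

theorem finsetSum_Sset_subset_Uset (ha : ∀ k n, 0 < a k n) (s : Finset ℕ) :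
    ∑ j ∈ s, Sset (a j) ⊆ Uset a := by
  have hs : s ⊆ Finset.range (s.sup id + 1) := fun i hi =>
    Finset.mem_range_succ_iff.2 (Finset.le_sup (f := id) hi)
  exact (Set.finsetSum_subset_finsetSum_of_subset hs fun j _ => zero_mem_Sset (ha j 0)).trans
    (Set.subset_iUnion_of_subset _ subset_rfl)

theorem Sset_subset_Uset : Sset (a 0) ⊆ Uset a :=
  Set.subset_iUnion_of_subset 0 (by simp)

theorem Uset_mono (h : ∀ k n, a k n ≤ b k n) : Uset a ⊆ Uset b :=
  Set.iUnion_mono fun _ =>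
    Set.finsetSum_subset_finsetSum _ _ _ fun j _ => Sset_mono (h j)

theorem smul_mem_Uset {c t : ℝ} (hc : 0 < c) (ht : |t| ≤ c) {x : ℕ →₀ ℝ}
    (hx : x ∈ Uset fun k n => a k n / c) : t • x ∈ Uset a := by
  obtain ⟨k, hk⟩ := Set.mem_iUnion.1 hx
  obtain ⟨g, hg, rfl⟩ := (Set.mem_finsetSum _ _ _).1 hk
  rw [Finset.smul_sum]
  exact Set.mem_iUnion.2 ⟨k, Set.finsetSum_mem_finsetSum _ _ _ fun j hj =>
    smul_mem_Sset hc ht (hg hj)⟩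

theorem Uset_add_Uset_subset (ha : ∀ k n, 0 < a k n) :
    (Uset fun k n => min (a (2 * k) n) (a (2 * k + 1) n)) +
      (Uset fun k n => min (a (2 * k) n) (a (2 * k + 1) n)) ⊆ Uset a := by
  rintro _ ⟨x, hx, y, hy, rfl⟩
  obtain ⟨k, hx⟩ := Set.mem_iUnion.1 hx
  obtain ⟨m, hy⟩ := Set.mem_iUnion.1 hy
  let evens := (Finset.range (k + 1)).map ⟨(2 * ·), fun i j h => by simpa using h⟩
  let odds := (Finset.range (m + 1)).map ⟨(2 * · + 1), fun i j h => by simpa using h⟩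
  have hx' : x ∈ ∑ i ∈ evens, Sset (a i) := by
    rw [Finset.sum_map]
    exact Set.finsetSum_subset_finsetSum _ _ _
      (fun j _ => Sset_mono fun n => min_le_left _ _) hx
  have hy' : y ∈ ∑ i ∈ odds, Sset (a i) := by
    rw [Finset.sum_map]
    exact Set.finsetSum_subset_finsetSum _ _ _
      (fun j _ => Sset_mono fun n => min_le_right _ _) hy
  have hdisj : Disjoint evens odds := Finset.disjoint_left.2 fun i hi hi' => by
    obtain ⟨j, -, rfl⟩ := Finset.mem_map.1 hi
    obtain ⟨l, -, hl : 2 * l + 1 = 2 * j⟩ := Finset.mem_map.1 hi'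
    omega
  refine finsetSum_Sset_subset_Uset ha (evens ∪ odds) ?_
  rw [Finset.sum_union hdisj]
  exact Set.add_mem_add hx' hy'

theorem eventually_smul_mem_Uset (ha : ∀ k n, 0 < a k n) (x : ℕ →₀ ℝ) :
    ∀ᶠ t in nhds (0 : ℝ), t • x ∈ Uset a := by
  have hsmall : ∀ᶠ t in nhds (0 : ℝ), ∀ j ∈ x.support, |t * x j| < a j j :=
    (eventually_all_finset _).2 fun j _ =>
      (isOpen_lt (by fun_prop) continuous_const).mem_nhds (by simpa using ha j j)
  filter_upwards [hsmall] with t ht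
  rw [← Finsupp.sum_single x, Finsupp.sum, Finset.smul_sum]
  refine finsetSum_Sset_subset_Uset ha _ (Set.finsetSum_mem_finsetSum _ _ _ fun j hj => ?_)
  rw [Finsupp.smul_single]
  exact single_mem_Sset (ht j hj)

end Uset

def usetFilterBasis : ModuleFilterBasis ℝ (ℕ →₀ ℝ) where
  sets := Uset '' {a | ∀ k, memA (a k)}
  nonempty := ⟨_, fun _ n => (n : ℝ) + 1, fun _ =>
    ⟨fun n => by positivity, tendsto_atTop_add_const_right _ 1 tendsto_natCast_atTop_atTop⟩, rfl⟩
  inter_sets := by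
    rintro _ _ ⟨a, ha, rfl⟩ ⟨b, hb, rfl⟩
    exact ⟨_, ⟨_, fun k => (ha k).min (hb k), rfl⟩,
      Set.subset_inter (Uset_mono fun _ _ => min_le_left _ _)
        (Uset_mono fun _ _ => min_le_right _ _)⟩
  zero' := by
    rintro _ ⟨a, ha, rfl⟩
    exact Sset_subset_Uset (zero_mem_Sset ((ha 0).1 0))
  add' := by
    rintro _ ⟨a, ha, rfl⟩
    exact ⟨_, ⟨_, fun k => (ha _).min (ha _), rfl⟩,
      Uset_add_Uset_subset fun k => (ha k).1⟩
  neg' := by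
    rintro _ ⟨a, ha, rfl⟩
    refine ⟨_, ⟨a, ha, rfl⟩, fun x hx => ?_⟩
    simpa using smul_mem_Uset (t := -1) one_pos (by simp) (by simpa using hx)
  conj' := by
    rintro x₀ _ ⟨a, ha, rfl⟩
    exact ⟨_, ⟨a, ha, rfl⟩, fun x hx => by simpa using hx⟩
  smul' := by
    rintro _ ⟨a, ha, rfl⟩
    refine ⟨Metric.closedBall 0 1, Metric.closedBall_mem_nhds _ one_pos, _, ⟨a, ha, rfl⟩, ?_⟩
    rintro _ ⟨t, ht, x, hx, rfl⟩
    exact smul_mem_Uset one_pos (by simpa using ht) (by simpa using hx)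
  smul_left' := by
    rintro x₀ _ ⟨a, ha, rfl⟩
    have hc : (0 : ℝ) < |x₀| + 1 := by positivity
    exact ⟨_, ⟨_, fun k => (ha k).div_const hc, rfl⟩,
      fun x hx => smul_mem_Uset hc (le_add_of_nonneg_right zero_le_one) hx⟩
  smul_right' := by
    rintro m₀ _ ⟨a, ha, rfl⟩
    exact eventually_smul_mem_Uset (fun k => (ha k).1) m₀

theorem usetFilterBasis_nhds_zero_hasBasis :
    (@nhds _ usetFilterBasis.topology 0).HasBasis (fun a : ℕ → ℕ → ℝ => ∀ k, memA (a k)) Uset :=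
  usetFilterBasis.toAddGroupFilterBasis.nhds_zero_hasBasis.to_hasBasis
    (by rintro _ ⟨a, ha, rfl⟩; exact ⟨a, ha, subset_rfl⟩)
    (fun a ha => ⟨Uset a, ⟨a, ha, rfl⟩, subset_rfl⟩)

/-- the family `𝒩 = {U(S)}` is a neighborhood base at `0` for a vector
topology `μ` on `ℝ^(ℕ)`, and in this topology the sequence `(e_n)` converges to `0`. -/
theorem stmt8 :
    ∃ μ : TopologicalSpace (ℕ →₀ ℝ),
      @IsTopologicalAddGroup (ℕ →₀ ℝ) μ _ ∧
      @ContinuousSMul ℝ (ℕ →₀ ℝ) _ _ μ ∧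
      (@nhds (ℕ →₀ ℝ) μ 0).HasBasis (fun a : ℕ → ℕ → ℝ => ∀ k, memA (a k)) Uset ∧
      Tendsto (fun n : ℕ => Finsupp.single n (1 : ℝ)) atTop (@nhds (ℕ →₀ ℝ) μ 0) := by
  refine ⟨usetFilterBasis.topology, usetFilterBasis.toAddGroupFilterBasis.isTopologicalAddGroup,
    usetFilterBasis.continuousSMul, usetFilterBasis_nhds_zero_hasBasis,
    usetFilterBasis_nhds_zero_hasBasis.tendsto_right_iff.2 fun a ha => ?_⟩
  filter_upwards [(ha 0).2.eventually_gt_atTop 1] with n hn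
  exact Sset_subset_Uset (single_mem_Sset (by simpa using hn))
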